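/- arXiv:1510.00091 — 2 statements merged into one kernel-verified Lean document; each statement's English description precedes it below -/
import Mathlib

section
/- When the estimated output equals the measured output without measurement noise (C = C_m, H = H_m, N = 0), the posterior output error covariance equals (C_m P C_mᵀ + H_m Q H_mᵀ)(C_m P C_mᵀ + H_m Q H_mᵀ + R)⁻¹ R, and this matrix is dominated by R in the Loewner order. -/
/-!
With `S = A + R`, `A - A S⁻¹ A = A S⁻¹ (S - A) = A S⁻¹ R`, and likewise
`R - A S⁻¹ R = R S⁻¹ R`, a congruence of the positive definite `S⁻¹`.
-/

open Matrix

namespace Matrix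

theorem PosSemidef.mul_mul_transpose_same {m n K : Type*} [Fintype n] [Finite m] [Ring K]
    [PartialOrder K] [StarRing K] [TrivialStar K] {P : Matrix n n K} (hP : P.PosSemidef)
    (C : Matrix m n K) : (C * P * Cᵀ).PosSemidef := by
  simpa only [conjTranspose_eq_transpose_of_trivial] using hP.mul_mul_conjTranspose_same C

section NonsingInv

variable {n K : Type*} [Fintype n] [DecidableEq n] [CommRing K]

theorem sub_mul_nonsing_inv_add_mul_self (A R : Matrix n n K) (h : IsUnit (A + R).det) :
    A - A * (A + R)⁻¹ * A = A * (A + R)⁻¹ * R :=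
  calc A - A * (A + R)⁻¹ * A = A * (A + R)⁻¹ * (A + R) - A * (A + R)⁻¹ * A := by
        rw [Matrix.mul_assoc A _ (A + R), nonsing_inv_mul _ h, Matrix.mul_one]
    _ = A * (A + R)⁻¹ * R := by rw [Matrix.mul_add]; abel

theorem sub_mul_nonsing_inv_add_mul (A R : Matrix n n K) (h : IsUnit (A + R).det) :
    R - A * (A + R)⁻¹ * R = R * (A + R)⁻¹ * R :=
  calc R - A * (A + R)⁻¹ * R = (A + R) * (A + R)⁻¹ * R - A * (A + R)⁻¹ * R := by
        rw [mul_nonsing_inv _ h, Matrix.one_mul]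
    _ = R * (A + R)⁻¹ * R := by rw [Matrix.add_mul, Matrix.add_mul]; abel

end NonsingInv

theorem PosDef.mul_nonsing_inv_mul_self {n K : Type*} [Fintype n] [DecidableEq n] [Field K]
    [PartialOrder K] [StarRing K] {S R : Matrix n n K} (hS : S.PosDef) (hR : R.IsHermitian) :
    (R * S⁻¹ * R).PosSemidef := by
  simpa only [hR.eq] using hS.inv.posSemidef.conjTranspose_mul_mul_same R

end Matrix

/-- When the estimated output equals the measured output without measurement noise
(C = Cm, H = Hm, N = 0), the posterior output error covariance equals
(Cm P Cmᵀ + Hm Q Hmᵀ)(Cm P Cmᵀ + Hm Q Hmᵀ + R)⁻¹ R, and it is dominated by R. -/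
theorem posterior_output_cov_measured {n p m : ℕ}
    (Cm : Matrix (Fin m) (Fin n) ℝ) (Hm : Matrix (Fin m) (Fin p) ℝ)
    (P : Matrix (Fin n) (Fin n) ℝ) (Q : Matrix (Fin p) (Fin p) ℝ)
    (R : Matrix (Fin m) (Fin m) ℝ)
    (hP : P.PosSemidef) (hQ : Q.PosSemidef) (hR : R.PosDef) :
    (Cm * P * Cmᵀ + Hm * Q * Hmᵀ)
        - (Cm * P * Cmᵀ + Hm * Q * Hmᵀ)
          * (Cm * P * Cmᵀ + Hm * Q * Hmᵀ + R)⁻¹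
          * (Cm * P * Cmᵀ + Hm * Q * Hmᵀ)ᵀ
      = (Cm * P * Cmᵀ + Hm * Q * Hmᵀ) * (Cm * P * Cmᵀ + Hm * Q * Hmᵀ + R)⁻¹ * R
    ∧ (R - (Cm * P * Cmᵀ + Hm * Q * Hmᵀ)
          * (Cm * P * Cmᵀ + Hm * Q * Hmᵀ + R)⁻¹ * R).PosSemidef := by
  set A := Cm * P * Cmᵀ + Hm * Q * Hmᵀ
  have hA : A.PosSemidef := (hP.mul_mul_transpose_same Cm).add (hQ.mul_mul_transpose_same Hm)
  have hS : (A + R).PosDef := PosDef.posSemidef_add hA hR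
  have hdet : IsUnit (A + R).det := (isUnit_iff_isUnit_det _).mp hS.isUnit
  rw [(isHermitian_iff_isSymm.mp hA.isHermitian).eq, sub_mul_nonsing_inv_add_mul _ _ hdet]
  exact ⟨sub_mul_nonsing_inv_add_mul_self A R hdet, hS.mul_nonsing_inv_mul_self hR.isHermitian⟩
end

section
/- The one-step Kalman prediction error covariance update P⁺ = (A P Aᵀ + G Q Gᵀ) − (A P C_mᵀ + G Q H_mᵀ + G N) S⁻¹ (A P C_mᵀ + G Q H_mᵀ + G N)ᵀ, with S = C_m P C_mᵀ + R̄ positive definite, yields a positive semidefinite matrix P⁺ whenever P, and the joint noise covariance [[Q, N],[Nᵀ, R]] are positive semidefinite. -/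
/-!
`P⁺` is the Schur complement of the innovation covariance `S` in the joint covariance of the
predicted state and the measurement, `(A x + G w, C x + H w + v)`. That joint covariance
is `M P Mᴴ + L Σ Lᴴ` with `M = [A; C]`, `L = [[G, 0], [H, 1]]` and `Σ = [[Q, N], [Nᴴ, R]]`,
hence positive semidefinite, and a Schur complement of a positive semidefinite block matrix with
respect to a positive definite block is again positive semidefinite.
-/

open Matrix

namespace Matrix

variable {K : Type*} {l m n p : Type*}

section Congruence

variable [Semiring K] [StarRing K]

theorem fromRows_mul_mul_conjTranspose_fromRows [Fintype n] (A : Matrix l n K)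
    (C : Matrix m n K) (P : Matrix n n K) :
    fromRows A C * P * (fromRows A C)ᴴ
      = fromBlocks (A * P * Aᴴ) (A * P * Cᴴ) (C * P * Aᴴ) (C * P * Cᴴ) := by
  simp only [conjTranspose_fromRows_eq_fromCols_conjTranspose, fromRows_mul, mul_fromCols,
    fromCols_fromRows_eq_fromBlocks]

theorem fromBlocks_zero_one_mul_mul_conjTranspose [Fintype m] [Fintype p] [DecidableEq m]
    (G : Matrix l p K) (H : Matrix m p K) (Q : Matrix p p K) (N : Matrix p m K)
    (R : Matrix m m K) :
    fromBlocks G (0 : Matrix l m K) H 1 * fromBlocks Q N Nᴴ R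
        * (fromBlocks G (0 : Matrix l m K) H 1)ᴴ
      = fromBlocks (G * Q * Gᴴ) (G * Q * Hᴴ + G * N) (H * Q * Gᴴ + Nᴴ * Gᴴ)
          (R + H * Q * Hᴴ + H * N + Nᴴ * Hᴴ) := by
  simp only [fromBlocks_conjTranspose, fromBlocks_multiply, conjTranspose_zero, conjTranspose_one,
    Matrix.mul_zero, Matrix.zero_mul, Matrix.mul_one, Matrix.one_mul, add_zero, Matrix.add_mul,
    Matrix.mul_assoc]
  congr 1
  abel

theorem kalman_jointCovariance_eq [Fintype m] [Fintype n] [Fintype p] [DecidableEq m]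
    (A : Matrix l n K) (C : Matrix m n K) (G : Matrix l p K) (H : Matrix m p K)
    {P : Matrix n n K} (hP : P.IsHermitian) {Q : Matrix p p K} (hQ : Q.IsHermitian)
    (N : Matrix p m K) (R : Matrix m m K) :
    fromBlocks (A * P * Aᴴ + G * Q * Gᴴ) (A * P * Cᴴ + G * Q * Hᴴ + G * N)
        (A * P * Cᴴ + G * Q * Hᴴ + G * N)ᴴ
        (C * P * Cᴴ + (R + H * Q * Hᴴ + H * N + Nᴴ * Hᴴ))
      = fromRows A C * P * (fromRows A C)ᴴ
        + fromBlocks G (0 : Matrix l m K) H 1 * fromBlocks Q N Nᴴ R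
          * (fromBlocks G (0 : Matrix l m K) H 1)ᴴ := by
  rw [fromRows_mul_mul_conjTranspose_fromRows, fromBlocks_zero_one_mul_mul_conjTranspose,
    fromBlocks_add]
  congr 1 <;>
    simp only [conjTranspose_add, conjTranspose_mul, conjTranspose_conjTranspose, hP.eq, hQ.eq,
      Matrix.mul_assoc] <;>
    abel

end Congruence

theorem kalman_jointCovariance_posSemidef [Ring K] [PartialOrder K] [StarRing K]
    [StarOrderedRing K] [Fintype l] [Fintype m] [Fintype n] [Fintype p] [DecidableEq m]
    (A : Matrix l n K) (C : Matrix m n K) (G : Matrix l p K) (H : Matrix m p K)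
    {P : Matrix n n K} (hP : P.PosSemidef) {Q : Matrix p p K} {N : Matrix p m K}
    {R : Matrix m m K} (hnoise : (fromBlocks Q N Nᴴ R).PosSemidef) :
    (fromBlocks (A * P * Aᴴ + G * Q * Gᴴ) (A * P * Cᴴ + G * Q * Hᴴ + G * N)
        (A * P * Cᴴ + G * Q * Hᴴ + G * N)ᴴ
        (C * P * Cᴴ + (R + H * Q * Hᴴ + H * N + Nᴴ * Hᴴ))).PosSemidef := by
  have hQ : Q.IsHermitian := (isHermitian_fromBlocks_iff.mp hnoise.isHermitian).1
  rw [kalman_jointCovariance_eq A C G H hP.isHermitian hQ]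
  exact (hP.mul_mul_conjTranspose_same _).add (hnoise.mul_mul_conjTranspose_same _)

theorem PosSemidef.schur_complement_of_fromBlocks [Field K] [PartialOrder K] [StarRing K]
    [StarOrderedRing K] [Finite m] [Fintype n] [DecidableEq n] {A : Matrix m m K}
    {B : Matrix m n K} {D : Matrix n n K} (h : (fromBlocks A B Bᴴ D).PosSemidef)
    (hD : D.PosDef) : (A - B * D⁻¹ * Bᴴ).PosSemidef :=
  letI := hD.isUnit.invertible
  (PosDef.fromBlocks₂₂ A B hD).mp h

end Matrix

/-- The one-step Kalman prediction error covariance update yields a positive semidefinite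
matrix whenever P and the joint noise covariance [[Q, N],[Nᵀ, R]] are positive semidefinite
and the innovation covariance S is positive definite. -/
theorem riccati_update_posSemidef {n p m : ℕ}
    (A : Matrix (Fin n) (Fin n) ℝ) (G : Matrix (Fin n) (Fin p) ℝ)
    (Cm : Matrix (Fin m) (Fin n) ℝ) (Hm : Matrix (Fin m) (Fin p) ℝ)
    (P : Matrix (Fin n) (Fin n) ℝ) (Q : Matrix (Fin p) (Fin p) ℝ)
    (R : Matrix (Fin m) (Fin m) ℝ) (N : Matrix (Fin p) (Fin m) ℝ)
    (hP : P.PosSemidef)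
    (hnoise : (Matrix.fromBlocks Q N Nᵀ R).PosSemidef)
    (hS : (Cm * P * Cmᵀ + (R + Hm * Q * Hmᵀ + Hm * N + Nᵀ * Hmᵀ)).PosDef) :
    ((A * P * Aᵀ + G * Q * Gᵀ)
      - (A * P * Cmᵀ + G * Q * Hmᵀ + G * N)
        * (Cm * P * Cmᵀ + (R + Hm * Q * Hmᵀ + Hm * N + Nᵀ * Hmᵀ))⁻¹
        * (A * P * Cmᵀ + G * Q * Hmᵀ + G * N)ᵀ).PosSemidef := by
  simp only [← conjTranspose_eq_transpose_of_trivial] at hnoise hS ⊢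
  exact (kalman_jointCovariance_posSemidef A Cm G Hm hP hnoise).schur_complement_of_fromBlocks hS
end
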